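/- For n ≥ 3, the function w(s) = φ(s)^{-n/2} satisfies L₁ w = 0, where L₁ = ∂_s² − λ₁ − ((n−2)/2)² + (n(3n−2)/4) φ^{2−2n} and λ₁ = n−1 is the first nonzero eigenvalue of the Laplacian on S^{n-1}. -/

import Mathlib

/-!
Every power of `φ` is a power of `c(s) = cosh((n-1)s)`, and `w = c^p` with `p = -n/(2(n-1))`.
For `f = cosh(a s)^p` one has `f'' = (a²p² - a²p(p-1) cosh(a s)^{-2}) f`, using `sinh² = cosh² - 1`.
With `a = n-1` this gives `a²p² = n²/4 = (n-1) + ((n-2)/2)²`, `a²p(p-1) = n(3n-2)/4`,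
and `φ^{2-2n} = c^{-2}`, so the terms of `L₁ w` cancel.
-/

/-- The profile function `φ` of the unit `n`-catenoid: `φ(s)^{n-1} = cosh((n-1)s)`. -/
noncomputable def catPhi (n : ℕ) (s : ℝ) : ℝ :=
  Real.cosh (((n : ℝ) - 1) * s) ^ ((1 : ℝ) / ((n : ℝ) - 1))

open Real

theorem catPhi_rpow (n : ℕ) (s q : ℝ) :
    catPhi n s ^ q = cosh (((n : ℝ) - 1) * s) ^ (q / ((n : ℝ) - 1)) := by
  rw [catPhi, ← rpow_mul (cosh_pos _).le, one_div_mul_eq_div]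

section CoshPow

variable (a p : ℝ)

theorem hasDerivAt_cosh_mul_rpow (x : ℝ) :
    HasDerivAt (fun t => cosh (a * t) ^ p) (a * p * sinh (a * x) * cosh (a * x) ^ (p - 1)) x := by
  have h := ((hasDerivAt_const_mul a).cosh (x := x)).rpow_const (p := p) (Or.inl (cosh_pos _).ne')
  convert h using 1
  ring

theorem deriv_cosh_mul_rpow :
    deriv (fun t => cosh (a * t) ^ p) = fun t => a * p * sinh (a * t) * cosh (a * t) ^ (p - 1) :=
  funext fun x => (hasDerivAt_cosh_mul_rpow a p x).deriv

theorem deriv_deriv_cosh_mul_rpow (x : ℝ) :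
    deriv (deriv fun t => cosh (a * t) ^ p) x
      = (a ^ 2 * p ^ 2 - a ^ 2 * p * (p - 1) * cosh (a * x) ^ (-2 : ℝ)) * cosh (a * x) ^ p := by
  have hc := cosh_pos (a * x)
  have h : HasDerivAt (fun t => a * p * sinh (a * t) * cosh (a * t) ^ (p - 1))
      (a * p * (cosh (a * x) * a) * cosh (a * x) ^ (p - 1)
        + a * p * sinh (a * x) * (a * (p - 1) * sinh (a * x) * cosh (a * x) ^ (p - 1 - 1))) x :=
    (((hasDerivAt_const_mul a).sinh).const_mul (a * p)).mul (hasDerivAt_cosh_mul_rpow a (p - 1) x)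
  have hp1 : cosh (a * x) ^ p = cosh (a * x) ^ (p - 1) * cosh (a * x) := by
    rw [rpow_sub_one hc.ne', div_mul_cancel₀ _ hc.ne']
  have hp2 : cosh (a * x) ^ (p - 1) = cosh (a * x) ^ (p - 1 - 1) * cosh (a * x) := by
    rw [rpow_sub_one hc.ne' (p - 1), div_mul_cancel₀ _ hc.ne']
  have hm2 : cosh (a * x) ^ (-2 : ℝ) * cosh (a * x) ^ 2 = 1 := by
    rw [rpow_neg hc.le, rpow_two, inv_mul_cancel₀ (by positivity)]
  rw [deriv_cosh_mul_rpow, h.deriv, hp1, hp2]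
  linear_combination (a ^ 2 * p * (p - 1) * cosh (a * x) ^ (p - 1 - 1)) * (hm2 + sinh_sq (a * x))

end CoshPow

/-- `w = φ^{-n/2}` solves `L₁ w = 0` where
`L₁ = ∂_s² − λ₁ − ((n−2)/2)² + (n(3n−2)/4) φ^{2−2n}` and `λ₁ = n − 1` is the first
nonzero eigenvalue of the Laplacian on `S^{n-1}`. -/
theorem scherk_stmt8 (n : ℕ) (hn : 3 ≤ n)
    (w : ℝ → ℝ) (hw : ∀ s : ℝ, w s = catPhi n s ^ (-(n : ℝ) / 2)) :
    ∀ s : ℝ,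
      deriv (deriv w) s - ((n : ℝ) - 1) * w s - (((n : ℝ) - 2) / 2) ^ 2 * w s
        + ((n : ℝ) * (3 * (n : ℝ) - 2) / 4) * catPhi n s ^ ((2 : ℝ) - 2 * n) * w s = 0 := by
  intro s
  have hn1 : (n : ℝ) - 1 ≠ 0 := by
    have : (3 : ℝ) ≤ n := by exact_mod_cast hn
    linarith
  have hw' : w = fun t => cosh (((n : ℝ) - 1) * t) ^ (-(n : ℝ) / 2 / ((n : ℝ) - 1)) :=
    funext fun t => by rw [hw, catPhi_rpow]
  have h2 : ((2 : ℝ) - 2 * n) / ((n : ℝ) - 1) = -2 := by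
    field_simp
    ring
  rw [hw', deriv_deriv_cosh_mul_rpow, catPhi_rpow, h2]
  field_simp
  ring
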